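/- Let M, N, P be types carrying the discrete topology. For a relation R ⊆ M × N define flagRel R as the set of pairs (f, g) of continuous functions f : (ℕ → Bool) → M, g : (ℕ → Bool) → N with (f w, g w) ∈ R for all w. Then for all R ⊆ M × N and S ⊆ N × P, flagRel (S ∘ R) = (flagRel S) ∘ (flagRel R), where T ∘ Q denotes relational composition {(a,c) | ∃ b, (a,b) ∈ Q ∧ (b,c) ∈ T}. (The flag modality is functorial: flag (ℓ' ∘ ℓ) = flag ℓ' ∘ flag ℓ.) -/
import Mathlib


/-- Relational composition `T ∘ Q = {(a,c) | ∃ b, (a,b) ∈ Q ∧ (b,c) ∈ T}`. -/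
def rcomp {α β γ : Type*} (T : Set (β × γ)) (Q : Set (α × β)) : Set (α × γ) :=
  {p | ∃ b, (p.1, b) ∈ Q ∧ (b, p.2) ∈ T}

/-- The flag of a relation `R ⊆ M × N`: pairs of continuous functions on the Cantor
space that are pointwise related by `R`. -/
def flagRel {M N : Type*} [TopologicalSpace M] [TopologicalSpace N]
    (R : Set (M × N)) : Set (((ℕ → Bool) → M) × ((ℕ → Bool) → N)) :=
  {fg | Continuous fg.1 ∧ Continuous fg.2 ∧ ∀ w, (fg.1 w, fg.2 w) ∈ R}

/-- The flag modality is functorial: `flag (ℓ' ∘ ℓ) = flag ℓ' ∘ flag ℓ`. -/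
theorem flagRel_comp {M N P : Type*}
    [TopologicalSpace M] [DiscreteTopology M] [TopologicalSpace N] [DiscreteTopology N]
    [TopologicalSpace P] [DiscreteTopology P]
    (R : Set (M × N)) (S : Set (N × P)) :
    flagRel (rcomp S R) = rcomp (flagRel S) (flagRel R) := by
  classical
  ext ⟨f, g⟩
  constructor
  · rintro ⟨hf, hg, hfg⟩
    set c : M × P → N := fun mp =>
      if h : ∃ b, (mp.1, b) ∈ R ∧ (b, mp.2) ∈ S then h.choose
      else (hfg (fun _ => false)).choose with hc
    have hcw : ∀ w, (f w, c (f w, g w)) ∈ R ∧ (c (f w, g w), g w) ∈ S := by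
      intro w
      have h' : ∃ b, (f w, b) ∈ R ∧ (b, g w) ∈ S := hfg w
      simp only [hc, dif_pos h']
      exact h'.choose_spec
    refine ⟨fun w => c (f w, g w), ⟨hf, ?_, fun w => (hcw w).1⟩, ?_, hg, fun w => (hcw w).2⟩
    · exact (continuous_of_discreteTopology (f := c)).comp (hf.prodMk hg)
    · exact (continuous_of_discreteTopology (f := c)).comp (hf.prodMk hg)
  · rintro ⟨h, ⟨hf, hh, hfh⟩, ⟨hh', hg, hhg⟩⟩
    exact ⟨hf, hg, fun w => ⟨h w, hfh w, hhg w⟩⟩
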